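/- arXiv:2512.14573 — 2 statements merged into one kernel-verified Lean document; each statement's English description precedes it below -/
import Mathlib

section
/- Let K be a field and R = K[x_1, x_2, x_3] a polynomial ring. For every n ≥ 0, the intersection of ideals (x_1, x_2)^n ∩ (x_1, x_3)^n equals the ideal generated by the monomials x_1^{n−i} x_2^i x_3^i for i = 0, 1, …, n. -/
open MvPolynomial

set_option linter.unnecessarySeqFocus false

lemma pow_span_two {K : Type*} [Field K] (a b : Fin 3) (n : ℕ) :
    (Ideal.span {(X a : MvPolynomial (Fin 3) K), X b}) ^ n
      = Ideal.span ((fun j : ℕ => (X a : MvPolynomial (Fin 3) K) ^ j * X b ^ (n - j)) '' {j | j ≤ n}) := by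
  induction n with
  | zero =>
      simp only [pow_zero]
      symm
      rw [Ideal.one_eq_top, Ideal.eq_top_iff_one]
      exact Ideal.subset_span ⟨0, by simp, by simp⟩
  | succ n ih =>
      rw [pow_succ, ih, Ideal.span_mul_span]
      apply le_antisymm <;> rw [Ideal.span_le]
      · rintro p hp
        simp only [Set.mem_mul, Set.mem_iUnion, Set.mem_image, Set.mem_setOf_eq, Set.mem_insert_iff,
          Set.mem_singleton_iff, exists_prop] at hp
        obtain ⟨s, ⟨j, hj, rfl⟩, t, (rfl | rfl), rfl⟩ := hp
        · apply Ideal.subset_span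
          refine ⟨j + 1, by simpa using Nat.succ_le_succ hj, ?_⟩
          beta_reduce
          rw [show n + 1 - (j + 1) = n - j from by omega]
          ring
        · apply Ideal.subset_span
          refine ⟨j, by simpa using hj.trans (Nat.le_succ n), ?_⟩
          beta_reduce
          rw [show n + 1 - j = n - j + 1 from by omega]
          ring
      · rintro p ⟨j, hj, rfl⟩
        simp only [Set.mem_setOf_eq] at hj
        apply Ideal.subset_span
        simp only [Set.mem_mul, Set.mem_iUnion, Set.mem_image, Set.mem_setOf_eq, Set.mem_insert_iff,
          Set.mem_singleton_iff, exists_prop]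
        rcases Nat.eq_zero_or_pos j with rfl | hjpos
        · refine ⟨X a ^ 0 * X b ^ (n - 0), ⟨0, by simp, rfl⟩, X b, Or.inr rfl, ?_⟩
          rw [show n + 1 - 0 = (n - 0) + 1 from by omega]
          ring
        · refine ⟨X a ^ (j - 1) * X b ^ (n - (j - 1)), ⟨j - 1, by omega, rfl⟩, X a, Or.inl rfl, ?_⟩
          rw [show n - (j - 1) = n + 1 - j from by omega, show X a ^ j = X a ^ (j - 1) * X a from by
            rw [← pow_succ, Nat.sub_add_cancel hjpos]]
          ring

lemma gen_eq_monomial {K : Type*} [Field K] (a b : Fin 3) (n : ℕ) :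
    ((fun j : ℕ => (X a : MvPolynomial (Fin 3) K) ^ j * X b ^ (n - j)) '' {j | j ≤ n})
      = (fun e => monomial e (1 : K)) ''
        ((fun j : ℕ => Finsupp.single a j + Finsupp.single b (n - j)) '' {j | j ≤ n}) := by
  rw [Set.image_image]
  apply Set.image_congr
  intro j _
  simp [X_pow_eq_monomial, monomial_mul]

lemma tgt_eq_monomial {K : Type*} [Field K] (n : ℕ) :
    ((fun i : ℕ => (X 0 : MvPolynomial (Fin 3) K) ^ (n - i) * X 1 ^ i * X 2 ^ i) '' {i | i ≤ n})
      = (fun e => monomial e (1 : K)) ''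
        ((fun i : ℕ => Finsupp.single (0 : Fin 3) (n - i) + Finsupp.single 1 i
            + Finsupp.single 2 i) '' {i | i ≤ n}) := by
  rw [Set.image_image]
  apply Set.image_congr
  intro i _
  simp [X_pow_eq_monomial, monomial_mul]

/-- In `R = K[x_1, x_2, x_3]`, for every `n ≥ 0`,
`(x_1, x_2)^n ∩ (x_1, x_3)^n` is generated by the monomials `x_1^(n-i) x_2^i x_3^i`,
`i = 0, 1, …, n`. -/
theorem inter_powers_eq_span {K : Type*} [Field K] (n : ℕ) :
    (Ideal.span {(X 0 : MvPolynomial (Fin 3) K), X 1}) ^ n ⊓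
        (Ideal.span {(X 0 : MvPolynomial (Fin 3) K), X 2}) ^ n =
      Ideal.span ((fun i : ℕ =>
        (X 0 : MvPolynomial (Fin 3) K) ^ (n - i) * X 1 ^ i * X 2 ^ i) '' {i | i ≤ n}) := by
  ext f
  rw [Submodule.mem_inf, pow_span_two, pow_span_two, gen_eq_monomial, gen_eq_monomial,
    tgt_eq_monomial, mem_ideal_span_monomial_image, mem_ideal_span_monomial_image,
    mem_ideal_span_monomial_image]
  constructor
  · rintro ⟨h1, h2⟩ d hd
    obtain ⟨e1, ⟨j, hj, rfl⟩, hle1⟩ := h1 d hd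
    obtain ⟨e2, ⟨k, hk, rfl⟩, hle2⟩ := h2 d hd
    simp only [Set.mem_setOf_eq] at hj hk
    have h10 := Finsupp.le_def.mp hle1 0
    have h11 := Finsupp.le_def.mp hle1 1
    have h20 := Finsupp.le_def.mp hle2 0
    have h22 := Finsupp.le_def.mp hle2 2
    simp [Finsupp.single_apply] at h10 h11 h20 h22
    refine ⟨_, ⟨min (min (d 1) (d 2)) n, by simp, rfl⟩, ?_⟩
    rw [Finsupp.le_def]
    intro s
    fin_cases s <;> simp [Finsupp.single_apply] <;> omega
  · intro h
    constructor <;> intro d hd <;> obtain ⟨e, ⟨i, hi, rfl⟩, hle⟩ := h d hd <;>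
      simp only [Set.mem_setOf_eq] at hi
    · have h0 := Finsupp.le_def.mp hle 0
      have h1 := Finsupp.le_def.mp hle 1
      simp [Finsupp.single_apply] at h0 h1
      refine ⟨_, ⟨n - i, by simp, rfl⟩, ?_⟩
      rw [Finsupp.le_def]
      intro s
      fin_cases s <;> simp [Finsupp.single_apply] <;> omega
    · have h0 := Finsupp.le_def.mp hle 0
      have h2 := Finsupp.le_def.mp hle 2
      simp [Finsupp.single_apply] at h0 h2
      refine ⟨_, ⟨n - i, by simp, rfl⟩, ?_⟩
      rw [Finsupp.le_def]
      intro s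
      fin_cases s <;> simp [Finsupp.single_apply] <;> omega
end

section
/- Let K be a field and R = K[x_1, x_2, x_3] a polynomial ring. Let I^{(n)} denote the ideal (x_1, x_2)^n ∩ (x_2, x_3)^n ∩ (x_1, x_3)^n (the n-th symbolic power of I = (x_1x_2, x_2x_3, x_3x_1)), and let A_n = (x_1, x_2)^n ∩ (x_1, x_3)^n. Then for every n ≥ 1, the minimal number of generators of the R-module A_n/I^{(n)} equals ⌈n/2⌉. -/
/-- `mu R M` : the minimal number of generators of the `R`-module `M`. -/
noncomputable def mu (R M : Type*) [Semiring R] [AddCommMonoid M] [Module R M] : ℕ :=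
  sInf {n | ∃ s : Finset M, s.card = n ∧ Submodule.span R (s : Set M) = ⊤}
/-- `defect A B = μ((A + B)/B)` : the minimal number of generators of the image of
`A + B` in `R ⧸ B`. -/
noncomputable def defect {R : Type*} [CommRing R] (A B : Ideal R) : ℕ :=
  mu R ↥(Submodule.map B.mkQ (A ⊔ B))
open MvPolynomial

section Aux
variable {K : Type*} [Field K]

noncomputable def dd (n j : ℕ) : Fin 3 →₀ ℕ :=
  Finsupp.single 0 (n - j) + Finsupp.single 1 j + Finsupp.single 2 j

lemma dd_apply0 (n j : ℕ) : dd n j 0 = n - j := by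
  simp [dd, Finsupp.single_apply]

lemma dd_apply1 (n j : ℕ) : dd n j 1 = j := by
  simp [dd, Finsupp.single_apply]

lemma dd_apply2 (n j : ℕ) : dd n j 2 = j := by
  simp [dd, Finsupp.single_apply]

lemma one_le_of_mem_span {i k : Fin 3} (a : MvPolynomial (Fin 3) K)
    (ha : a ∈ Ideal.span {X i, X k}) (m : Fin 3 →₀ ℕ) (hm : coeff m a ≠ 0) :
    1 ≤ m i + m k := by
  classical
  rw [Ideal.mem_span_pair] at ha
  obtain ⟨p, q, rfl⟩ := ha
  by_contra h
  push_neg at h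
  have hi : m i = 0 := by omega
  have hk : m k = 0 := by omega
  rw [coeff_add, coeff_mul_X', coeff_mul_X'] at hm
  simp [Finsupp.mem_support_iff, hi, hk] at hm

lemma le_of_mem_pow {i k : Fin 3} (N : ℕ) (a : MvPolynomial (Fin 3) K)
    (ha : a ∈ Ideal.span {X i, X k} ^ N) (m : Fin 3 →₀ ℕ) (hm : coeff m a ≠ 0) :
    N ≤ m i + m k := by
  classical
  induction N generalizing a m with
  | zero => exact Nat.zero_le _
  | succ N ih =>
    rw [pow_succ] at ha
    revert m hm
    refine Submodule.mul_induction_on ha ?_ ?_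
    · intro x hx y hy m hm
      rw [coeff_mul] at hm
      obtain ⟨⟨m1, m2⟩, hmem, hne⟩ := Finset.exists_ne_zero_of_sum_ne_zero hm
      rw [Finset.HasAntidiagonal.mem_antidiagonal] at hmem
      have h1 : coeff m1 x ≠ 0 := fun h => hne (by simp [h])
      have h2 : coeff m2 y ≠ 0 := fun h => hne (by simp [h])
      have hx' := ih x hx m1 h1
      have hy' := one_le_of_mem_span y hy m2 h2
      have e1 : m i = m1 i + m2 i := by rw [← hmem]; simp
      have e2 : m k = m1 k + m2 k := by rw [← hmem]; simp
      omega
    · intro x y hx hy m hm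
      rw [coeff_add] at hm
      rcases (by by_contra h; push_neg at h; simp [h.1, h.2] at hm :
          coeff m x ≠ 0 ∨ coeff m y ≠ 0) with h | h
      · exact hx m h
      · exact hy m h

lemma monomial_mem_pow {i k : Fin 3} (hik : i ≠ k) (N : ℕ) (m : Fin 3 →₀ ℕ)
    (c : K) (hm : N ≤ m i + m k) :
    (monomial m c : MvPolynomial (Fin 3) K) ∈ Ideal.span {X i, X k} ^ N := by
  classical
  have hXi : (X i : MvPolynomial (Fin 3) K) ∈ Ideal.span {X i, X k} :=
    Ideal.subset_span (by simp)
  have hXk : (X k : MvPolynomial (Fin 3) K) ∈ Ideal.span {X i, X k} :=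
    Ideal.subset_span (by simp)
  set t : Fin 3 →₀ ℕ := Finsupp.single i (m i) + Finsupp.single k (m k) with ht
  have hle : t ≤ m := by
    rw [Finsupp.le_def]
    intro s
    rcases eq_or_ne s i with rfl | hsi
    · simp [ht, Finsupp.single_apply, hik.symm]
    · rcases eq_or_ne s k with rfl | hsk
      · simp [ht, Finsupp.single_apply, Ne.symm hsi]
      · simp [ht, Finsupp.single_apply, Ne.symm hsi, Ne.symm hsk]
  have key : (monomial m c : MvPolynomial (Fin 3) K)
      = monomial (m - t) c * monomial t 1 := by
    rw [monomial_mul, mul_one, tsub_add_cancel_of_le hle]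
  rw [key]
  apply Ideal.mul_mem_left
  have hmono : (monomial t (1:K) : MvPolynomial (Fin 3) K)
      = X i ^ (m i) * X k ^ (m k) := by
    rw [X_pow_eq_monomial, X_pow_eq_monomial, monomial_mul, one_mul]
  rw [hmono]
  have h12 := Ideal.mul_mem_mul (Ideal.pow_mem_pow hXi (m i)) (Ideal.pow_mem_pow hXk (m k))
  rw [← pow_add] at h12
  exact Ideal.pow_le_pow_right hm h12

lemma coeff_dd_mul (n j : ℕ) (h2j : 2 * j < n) (r a : MvPolynomial (Fin 3) K)
    (ha1 : a ∈ Ideal.span {(X 0 : MvPolynomial (Fin 3) K), X 1} ^ n)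
    (ha2 : a ∈ Ideal.span {(X 0 : MvPolynomial (Fin 3) K), X 2} ^ n) :
    coeff (dd n j) (r * a) = constantCoeff r * coeff (dd n j) a := by
  classical
  rw [coeff_mul, Finset.sum_eq_single ((0 : Fin 3 →₀ ℕ), dd n j)]
  · rw [constantCoeff_eq]
  · rintro ⟨m1, m2⟩ hmem hne
    rw [Finset.HasAntidiagonal.mem_antidiagonal] at hmem
    by_cases hz : coeff m2 a = 0
    · simp [hz]
    · exfalso
      have h1 := le_of_mem_pow n a ha1 m2 hz
      have h2 := le_of_mem_pow n a ha2 m2 hz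
      have hle : ∀ s, m2 s ≤ dd n j s := by
        intro s; rw [← hmem]; simp
      have e0 := hle 0; have e1 := hle 1; have e2 := hle 2
      rw [dd_apply0] at e0; rw [dd_apply1] at e1; rw [dd_apply2] at e2
      have hm2 : m2 = dd n j := by
        ext s
        fin_cases s
        · show m2 0 = dd n j 0
          rw [dd_apply0]; omega
        · show m2 1 = dd n j 1
          rw [dd_apply1]; omega
        · show m2 2 = dd n j 2
          rw [dd_apply2]; omega
      have hm1 : m1 = 0 := by
        rw [hm2] at hmem
        exact add_eq_right.mp hmem
      exact hne (by rw [hm1, hm2])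
  · intro h
    exact absurd (Finset.HasAntidiagonal.mem_antidiagonal.mpr (by simp)) h

lemma monomial_mem_cover (n c : ℕ) (hc : n ≤ 2 * c) (m : Fin 3 →₀ ℕ) (cf : K)
    (h01 : n ≤ m 0 + m 1) (h02 : n ≤ m 0 + m 2) (h12 : m 1 + m 2 < n) :
    (monomial m cf : MvPolynomial (Fin 3) K) ∈
      Ideal.span (Set.range fun j : Fin c =>
        (monomial (dd n (j : ℕ)) 1 : MvPolynomial (Fin 3) K)) := by
  classical
  set j := min (m 1) (m 2) with hj
  have hjc : j < c := by omega
  have hle : dd n j ≤ m := by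
    rw [Finsupp.le_def]
    intro s
    fin_cases s
    · show dd n j 0 ≤ m 0
      rw [dd_apply0]; omega
    · show dd n j 1 ≤ m 1
      rw [dd_apply1]; omega
    · show dd n j 2 ≤ m 2
      rw [dd_apply2]; omega
  have key : (monomial m cf : MvPolynomial (Fin 3) K)
      = monomial (m - dd n j) cf * monomial (dd n j) 1 := by
    rw [monomial_mul, mul_one, tsub_add_cancel_of_le hle]
  rw [key]
  exact Ideal.mul_mem_left _ _ (Ideal.subset_span ⟨⟨j, hjc⟩, rfl⟩)

set_option maxHeartbeats 1000000 in
set_option synthInstance.maxHeartbeats 200000 in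
theorem mu_defect_aux {K : Type*} [Field K] (n c : ℕ) (hn : 1 ≤ n)
    (hcu : n ≤ 2 * c) (hcl : ∀ j, j < c → 2 * j < n) :
    mu (MvPolynomial (Fin 3) K)
      ↥(Submodule.map
        ((Ideal.span {(X 0 : MvPolynomial (Fin 3) K), X 1} ^ n ⊓
          Ideal.span {(X 1 : MvPolynomial (Fin 3) K), X 2} ^ n ⊓
          Ideal.span {(X 0 : MvPolynomial (Fin 3) K), X 2} ^ n)).mkQ
        (Ideal.span {(X 0 : MvPolynomial (Fin 3) K), X 1} ^ n ⊓
          Ideal.span {(X 0 : MvPolynomial (Fin 3) K), X 2} ^ n)) = c := by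
  classical
  set P01 : Ideal (MvPolynomial (Fin 3) K) := Ideal.span {X 0, X 1} with hP01
  set P12 : Ideal (MvPolynomial (Fin 3) K) := Ideal.span {X 1, X 2} with hP12
  set P02 : Ideal (MvPolynomial (Fin 3) K) := Ideal.span {X 0, X 2} with hP02
  set B : Ideal (MvPolynomial (Fin 3) K) := P01 ^ n ⊓ P12 ^ n ⊓ P02 ^ n with hB
  set A : Ideal (MvPolynomial (Fin 3) K) := P01 ^ n ⊓ P02 ^ n with hA
  set N := Submodule.map B.mkQ A with hN
  have hB12 : B ≤ P12 ^ n := le_trans inf_le_left inf_le_right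
  set g : Fin c → MvPolynomial (Fin 3) K := fun j => monomial (dd n (j : ℕ)) 1 with hg
  have hgA : ∀ j : Fin c, g j ∈ A := by
    intro j
    have h2j := hcl j j.2
    refine Submodule.mem_inf.mpr ⟨?_, ?_⟩
    · exact monomial_mem_pow (by decide) n _ _ (by rw [dd_apply0, dd_apply1]; omega)
    · exact monomial_mem_pow (by decide) n _ _ (by rw [dd_apply0, dd_apply2]; omega)
  have cover : ∀ a ∈ A, a ∈ Ideal.span (Set.range g) ⊔ B := by
    intro a haA
    obtain ⟨ha1, ha2⟩ := Submodule.mem_inf.mp haA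
    rw [← support_sum_monomial_coeff a]
    apply Submodule.sum_mem
    intro m hm
    have hm0 : coeff m a ≠ 0 := mem_support_iff.mp hm
    have h01 := le_of_mem_pow n a ha1 m hm0
    have h02 := le_of_mem_pow n a ha2 m hm0
    by_cases h12 : n ≤ m 1 + m 2
    · refine Submodule.mem_sup_right
        (Submodule.mem_inf.mpr ⟨Submodule.mem_inf.mpr ⟨?_, ?_⟩, ?_⟩)
      · exact monomial_mem_pow (by decide) n m _ h01
      · exact monomial_mem_pow (by decide) n m _ h12
      · exact monomial_mem_pow (by decide) n m _ h02
    · push_neg at h12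
      exact Submodule.mem_sup_left (monomial_mem_cover n c hcu m _ h01 h02 h12)
  set φ : MvPolynomial (Fin 3) K →ₗ[K] (Fin c → K) :=
    LinearMap.pi (fun j : Fin c => lcoeff K (dd n (j : ℕ))) with hφ
  have hφB : ∀ b ∈ B, φ b = 0 := by
    intro b hb
    funext j
    have h2j := hcl j j.2
    by_contra h
    have hco : coeff (dd n (j : ℕ)) b ≠ 0 := by
      simpa [hφ, LinearMap.pi_apply, lcoeff_apply] using h
    have := le_of_mem_pow n b (hB12 hb) (dd n (j : ℕ)) hco
    rw [dd_apply1, dd_apply2] at this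
    omega
  set s₀ : Finset ↥N := Finset.image
    (fun j : Fin c => (⟨B.mkQ (g j), Submodule.mem_map_of_mem (hgA j)⟩ : ↥N))
    Finset.univ with hs₀
  have hspan₀ : Submodule.span (MvPolynomial (Fin 3) K) (s₀ : Set ↥N) = ⊤ := by
    rw [eq_top_iff]
    rintro ⟨x, hx⟩ -
    obtain ⟨a, haA, hax⟩ := Submodule.mem_map.mp hx
    obtain ⟨u, hu, z, hz, rfl⟩ := Submodule.mem_sup.mp (cover a haA)
    have hzq : B.mkQ z = 0 := by
      rw [Submodule.mkQ_apply, Submodule.Quotient.mk_eq_zero]; exact hz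
    have hux : B.mkQ u = x := by rw [← hax, map_add, hzq, add_zero]
    have key : ∀ v, v ∈ Submodule.span (MvPolynomial (Fin 3) K) (Set.range g) →
        B.mkQ v ∈ Submodule.map N.subtype
          (Submodule.span (MvPolynomial (Fin 3) K) (s₀ : Set ↥N)) := by
      intro v hv
      induction hv using Submodule.span_induction with
      | mem y hy =>
        obtain ⟨j, rfl⟩ := hy
        exact ⟨⟨B.mkQ (g j), Submodule.mem_map_of_mem (hgA j)⟩,
          Submodule.subset_span
            (Finset.mem_coe.mpr (Finset.mem_image.mpr ⟨j, Finset.mem_univ j, rfl⟩)), rfl⟩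
      | zero => rw [map_zero]; exact Submodule.zero_mem _
      | add y z hy hz ihy ihz => rw [map_add]; exact Submodule.add_mem _ ihy ihz
      | smul r y hy ihy => rw [map_smul]; exact Submodule.smul_mem _ r ihy
    obtain ⟨w, hw, hwx⟩ := key u hu
    have hwq : w = ⟨x, hx⟩ := Subtype.ext (hwx.trans hux)
    exact hwq ▸ hw
  have lower : ∀ s : Finset ↥N,
      Submodule.span (MvPolynomial (Fin 3) K) (s : Set ↥N) = ⊤ → c ≤ s.card := by
    intro s hspan
    have hlift : ∀ x : ↥N, ∃ a, a ∈ A ∧ B.mkQ a = ↑x := fun x => Submodule.mem_map.mp x.2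
    choose ℓ hℓA hℓq using hlift
    set t : Finset (Fin c → K) := Finset.image (fun x => φ (ℓ x)) s with hts
    set W : Submodule K (Fin c → K) := Submodule.span K (t : Set (Fin c → K)) with hW
    have main : ∀ x : ↥N, x ∈ Submodule.span (MvPolynomial (Fin 3) K) (s : Set ↥N) →
        ∀ a : MvPolynomial (Fin 3) K, B.mkQ a = ↑x → φ a ∈ W := by
      intro x hx
      induction hx using Submodule.span_induction with
      | mem y hy =>
        intro a ha
        have hmem : a - ℓ y ∈ B := by
          rw [← Submodule.ker_mkQ B, LinearMap.mem_ker, map_sub, ha, hℓq, sub_self]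
        have hae : φ a = φ (ℓ y) + φ (a - ℓ y) := by rw [map_sub]; ring
        rw [hae, hφB _ hmem, add_zero]
        exact Submodule.subset_span
          (Finset.mem_coe.mpr (Finset.mem_image.mpr ⟨y, Finset.mem_coe.mp hy, rfl⟩))
      | zero =>
        intro a ha
        have haB : a ∈ B := by
          rw [← Submodule.ker_mkQ B, LinearMap.mem_ker]
          simpa using ha
        rw [hφB a haB]; exact W.zero_mem
      | add y z hy hz ihy ihz =>
        intro a ha
        have hcoe : ((y + z : ↥N) : MvPolynomial (Fin 3) K ⧸ B) = ↑y + ↑z := rfl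
        have hmem : a - ℓ y - ℓ z ∈ B := by
          rw [← Submodule.ker_mkQ B, LinearMap.mem_ker, map_sub, map_sub, ha, hℓq, hℓq,
            hcoe]
          abel
        have hae : φ a = φ (ℓ y) + φ (ℓ z) + φ (a - ℓ y - ℓ z) := by
          rw [map_sub, map_sub]; ring
        rw [hae, hφB _ hmem, add_zero]
        exact W.add_mem (ihy (ℓ y) (hℓq y)) (ihz (ℓ z) (hℓq z))
      | smul r y hy ihy =>
        intro a ha
        have hcoe : ((r • y : ↥N) : MvPolynomial (Fin 3) K ⧸ B) = r • (↑y) := rfl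
        have hq : B.mkQ (r * ℓ y) = r • (↑y : MvPolynomial (Fin 3) K ⧸ B) := by
          rw [← smul_eq_mul, map_smul, hℓq]
        have hmem : a - r * ℓ y ∈ B := by
          rw [← Submodule.ker_mkQ B, LinearMap.mem_ker, map_sub, ha, hq, hcoe, sub_self]
        have hae : φ a = φ (r * ℓ y) + φ (a - r * ℓ y) := by rw [map_sub]; ring
        rw [hae, hφB _ hmem, add_zero]
        have hKL : φ (r * ℓ y) = constantCoeff r • φ (ℓ y) := by
          funext j
          have h2j := hcl j j.2
          obtain ⟨h1, h2⟩ := Submodule.mem_inf.mp (hℓA y)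
          simp only [hφ, LinearMap.pi_apply, lcoeff_apply, Pi.smul_apply, smul_eq_mul]
          exact coeff_dd_mul n j h2j r (ℓ y) h1 h2
        rw [hKL]
        exact W.smul_mem _ (ihy (ℓ y) (hℓq y))
    have hsingle : ∀ j : Fin c, Pi.single j (1 : K) ∈ W := by
      intro j
      have hx : (⟨B.mkQ (g j), Submodule.mem_map_of_mem (hgA j)⟩ : ↥N) ∈
          Submodule.span (MvPolynomial (Fin 3) K) (s : Set ↥N) := by
        rw [hspan]; exact Submodule.mem_top
      have hmem := main _ hx (g j) rfl
      have hφg : φ (g j) = Pi.single j (1 : K) := by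
        funext k
        simp only [hφ, LinearMap.pi_apply, lcoeff_apply, hg]
        rw [coeff_monomial]
        rcases eq_or_ne k j with rfl | hkj
        · simp [Pi.single_apply]
        · have hne : dd n (j : ℕ) ≠ dd n (k : ℕ) := by
            intro h
            apply hkj
            have hcongr := DFunLike.congr_fun h (1 : Fin 3)
            rw [dd_apply1, dd_apply1] at hcongr
            exact Fin.ext hcongr.symm
          rw [if_neg hne, Pi.single_apply, if_neg hkj]
      rwa [hφg] at hmem
    have hWtop : W = ⊤ := by
      apply le_antisymm le_top
      rw [← (Pi.basisFun K (Fin c)).span_eq, Submodule.span_le]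
      rintro v ⟨j, rfl⟩
      rw [Pi.basisFun_apply]
      exact hsingle j
    have hfr : c ≤ t.card := by
      have h1 := finrank_span_finset_le_card (R := K) t
      rw [Set.finrank, ← hW, hWtop, finrank_top] at h1
      simpa [Module.finrank_pi] using h1
    exact le_trans hfr Finset.card_image_le
  unfold mu
  apply le_antisymm
  · refine le_trans (Nat.sInf_le ⟨s₀, rfl, hspan₀⟩) ?_
    rw [hs₀]
    exact le_trans Finset.card_image_le (by simp)
  · refine le_csInf ⟨s₀.card, s₀, rfl, hspan₀⟩ ?_
    rintro k ⟨s, rfl, hspan⟩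
    exact lower s hspan

end Aux

lemma ceil_half_eq (n : ℕ) (hn : 1 ≤ n) : ⌈(n : ℚ) / 2⌉₊ = (n + 1) / 2 := by
  rw [Nat.ceil_eq_iff (by omega)]
  have h1 : n ≤ 2 * ((n + 1) / 2) := by omega
  have h2 : 2 * ((n + 1) / 2) ≤ n + 1 := by omega
  have h3 : 1 ≤ (n + 1) / 2 := by omega
  have hq1 : (n : ℚ) ≤ 2 * (((n + 1) / 2 : ℕ) : ℚ) := by exact_mod_cast h1
  have hq2 : 2 * (((n + 1) / 2 : ℕ) : ℚ) ≤ (n : ℚ) + 1 := by exact_mod_cast h2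
  constructor
  · rw [Nat.cast_sub h3]
    push_cast
    linarith
  · linarith


/-- In `R = K[x_1, x_2, x_3]`, let
`I^{(n)} = (x_1, x_2)^n ∩ (x_2, x_3)^n ∩ (x_1, x_3)^n` (the `n`-th symbolic power of
`I = (x_1x_2, x_2x_3, x_3x_1)`) and `A_n = (x_1, x_2)^n ∩ (x_1, x_3)^n`.  Then for every
`n ≥ 1`, `μ(A_n / I^{(n)}) = ⌈n/2⌉`. -/
theorem defect_saturation_symbolic {K : Type*} [Field K] (n : ℕ) (hn : 1 ≤ n) :
    mu (MvPolynomial (Fin 3) K)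
      ↥(Submodule.map
        ((Ideal.span {(X 0 : MvPolynomial (Fin 3) K), X 1} ^ n ⊓
          Ideal.span {(X 1 : MvPolynomial (Fin 3) K), X 2} ^ n ⊓
          Ideal.span {(X 0 : MvPolynomial (Fin 3) K), X 2} ^ n)).mkQ
        (Ideal.span {(X 0 : MvPolynomial (Fin 3) K), X 1} ^ n ⊓
          Ideal.span {(X 0 : MvPolynomial (Fin 3) K), X 2} ^ n)) = ⌈(n : ℚ) / 2⌉₊ := by
  have hc := ceil_half_eq n hn
  rw [hc]
  exact mu_defect_aux n ((n + 1) / 2) hn (by omega) (by omega)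
end
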